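/- arXiv:2106.04374 — 2 statements merged into one kernel-verified Lean document; each statement's English description precedes it below -/
import Mathlib

section
/- Let N and H be groups, φ : H → Aut(N) a group homomorphism, G = N ⋊_φ H, and S a subgroup of H. Let N^S = { n ∈ N : φ(s)(n) = n for all s ∈ S }, which is a subgroup of N, and let C be the centralizer in G of the subgroup inr(S). Then: (i) inl(N^S) is a normal subgroup of C; (ii) inr(C_H(S)) is a subgroup of C; (iii) inl(N^S) ∩ inr(C_H(S)) is trivial; and (iv) every element of C can be written as inl(n)·inr(h) with n ∈ N^S and h ∈ C_H(S). In other words, C decomposes as the internal semidirect product C = inl(N^S) ⋊ inr(C_H(S)). -/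
open SemidirectProduct

/-- The subgroup `N^S` of `S`-fixed points of `N`, for `φ : H →* MulAut N` and `S ≤ H`. -/
def fixedPointsSubgroup {N H : Type*} [Group N] [Group H] (φ : H →* MulAut N)
    (S : Subgroup H) : Subgroup N where
  carrier := {n | ∀ s ∈ S, φ s n = n}
  one_mem' := by intro s _; exact map_one (φ s)
  mul_mem' := by
    intro a b ha hb s hs
    rw [map_mul, ha s hs, hb s hs]
  inv_mem' := by
    intro a ha s hs
    rw [map_inv, ha s hs]


lemma mem_centralizer_inr_iff {N H : Type*} [Group N] [Group H] (φ : H →* MulAut N)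
    (S : Subgroup H) (g : N ⋊[φ] H) :
    g ∈ Subgroup.centralizer ((S.map (SemidirectProduct.inr : H →* N ⋊[φ] H) :
          Subgroup (N ⋊[φ] H)) : Set (N ⋊[φ] H)) ↔
      g.left ∈ fixedPointsSubgroup φ S ∧ g.right ∈ Subgroup.centralizer (S : Set H) := by
  rw [Subgroup.mem_centralizer_iff]
  constructor
  · intro h
    constructor
    · intro s hs
      have := h (SemidirectProduct.inr s) ⟨s, hs, rfl⟩
      have hl := congrArg SemidirectProduct.left this
      simpa using hl
    · rw [Subgroup.mem_centralizer_iff]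
      intro s hs
      have := h (SemidirectProduct.inr s) ⟨s, hs, rfl⟩
      have hr := congrArg SemidirectProduct.right this
      simpa using hr
  · rintro ⟨h1, h2⟩ x ⟨s, hs, rfl⟩
    ext
    · simpa using h1 s hs
    · simpa using (Subgroup.mem_centralizer_iff.mp h2) s hs

/-- the centralizer `C` in `G = N ⋊[φ] H` of `inr S` decomposes as the
internal semidirect product of the normal subgroup `inl(N^S)` and the subgroup
`inr(C_H(S))`. -/
theorem semidirect_centralizer_decomposition
    {N H : Type*} [Group N] [Group H] (φ : H →* MulAut N) (S : Subgroup H) :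
    ((fixedPointsSubgroup φ S).map (SemidirectProduct.inl : N →* N ⋊[φ] H) ≤
        Subgroup.centralizer ((S.map (SemidirectProduct.inr : H →* N ⋊[φ] H) :
          Subgroup (N ⋊[φ] H)) : Set (N ⋊[φ] H))) ∧
    (∀ c ∈ Subgroup.centralizer ((S.map (SemidirectProduct.inr : H →* N ⋊[φ] H) :
          Subgroup (N ⋊[φ] H)) : Set (N ⋊[φ] H)),
      ∀ g ∈ (fixedPointsSubgroup φ S).map (SemidirectProduct.inl : N →* N ⋊[φ] H),
        c * g * c⁻¹ ∈ (fixedPointsSubgroup φ S).map (SemidirectProduct.inl : N →* N ⋊[φ] H)) ∧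
    ((Subgroup.centralizer (S : Set H)).map (SemidirectProduct.inr : H →* N ⋊[φ] H) ≤
        Subgroup.centralizer ((S.map (SemidirectProduct.inr : H →* N ⋊[φ] H) :
          Subgroup (N ⋊[φ] H)) : Set (N ⋊[φ] H))) ∧
    ((fixedPointsSubgroup φ S).map (SemidirectProduct.inl : N →* N ⋊[φ] H) ⊓
        (Subgroup.centralizer (S : Set H)).map (SemidirectProduct.inr : H →* N ⋊[φ] H) = ⊥) ∧
    (∀ c ∈ Subgroup.centralizer ((S.map (SemidirectProduct.inr : H →* N ⋊[φ] H) :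
          Subgroup (N ⋊[φ] H)) : Set (N ⋊[φ] H)),
      ∃ n ∈ fixedPointsSubgroup φ S, ∃ h ∈ Subgroup.centralizer (S : Set H),
        c = SemidirectProduct.inl n * SemidirectProduct.inr h) := by
  have key := mem_centralizer_inr_iff φ S
  refine ⟨?_, ?_, ?_, ?_, ?_⟩
  · rintro x ⟨n, hn, rfl⟩
    rw [key]
    exact ⟨by simpa using hn, by simp [Subgroup.mem_centralizer_iff]⟩
  · rintro c hc g ⟨n, hn, rfl⟩
    rw [key] at hc
    refine ⟨c.left * φ c.right n * c.left⁻¹, ?_, ?_⟩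
    · intro s hs
      have h1 : φ s c.left = c.left := hc.1 s hs
      have h2 : s * c.right = c.right * s := Subgroup.mem_centralizer_iff.mp hc.2 s hs
      have h3 : φ s (φ c.right n) = φ c.right n := by
        have : φ (s * c.right) n = φ (c.right * s) n := by rw [h2]
        simpa [map_mul, hn s hs] using this
      simp [map_mul, map_inv, h1, h3]
    · ext <;> simp [mul_assoc]
  · rintro x ⟨h, hh, rfl⟩
    rw [key]
    refine ⟨?_, by simpa using hh⟩
    intro s hs
    simp
  · rw [eq_bot_iff]
    rintro x ⟨⟨n, hn, rfl⟩, ⟨h, hh, hx⟩⟩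
    have hr := congrArg SemidirectProduct.right hx
    have hl := congrArg SemidirectProduct.left hx
    simp at hr hl
    simp [Subgroup.mem_bot]
    ext <;> simp [← hl, hr]
  · intro c hc
    rw [key] at hc
    exact ⟨c.left, hc.1, c.right, hc.2, by ext <;> simp⟩
end

section
/- Let k be an algebraically closed field of characteristic different from 2, V a finite-dimensional k-vector space, ε ∈ {1, -1}, and B a nondegenerate ε-symmetric bilinear form on V. Let x be a nilpotent linear endomorphism of V satisfying B(x v, w) + B(v, x w) = 0 for all v, w ∈ V. Then there exist finitely many subspaces V^(1), …, V^(m) of V and pairwise distinct positive integers s₁ > s₂ > ⋯ > s_m such that: (i) the V^(i) form an internal direct sum equal to V; (ii) each V^(i) is x-invariant; (iii) the V^(i) are pairwise B-orthogonal, i.e. B(v, w) = 0 for v ∈ V^(i), w ∈ V^(j), i ≠ j; (iv) the restriction of B to each V^(i) is nondegenerate; and (v) on each V^(i), x has all Jordan blocks of size exactly s_i, i.e. x^{s_i} vanishes on V^(i) and s_i · dim(ker x ∩ V^(i)) = dim V^(i). -/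
/-!
Let `x ^ (s + 1)` vanish on a nondegenerate `x`-invariant subspace `T`. Because `x` is skew, the
form `C g h = B g (x ^ s h)` is reflexive, hence nondegenerate on any complement `G` of its radical
in `T`. The sum of the `x ^ i G` for `i ≤ s` is then direct, `x`-invariant and `B`-nondegenerate,
with `x`-kernel `x ^ s G`, so all its Jordan blocks have size `s + 1`; and `x ^ s` vanishes on its
orthogonal complement in `T`, to which induction on `s` applies. Sizes that do not occur give zero
summands.
-/

open Module LinearMap

section

variable {k V : Type*} [Field k] [AddCommGroup V] [Module k V]

namespace LinearMap.IsSkewAdjoint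

variable {B : LinearMap.BilinForm k V} {x : Module.End k V}

theorem apply_pow_left (hx : B.IsSkewAdjoint x) (n : ℕ) (u w : V) :
    B ((x ^ n) u) w = (-1) ^ n * B u ((x ^ n) w) := by
  induction n generalizing w with
  | zero => simp
  | succ n ih =>
    have hu : (x ^ (n + 1)) u = x ((x ^ n) u) := by rw [pow_succ', Module.End.mul_apply]
    have hw : (x ^ (n + 1)) w = (x ^ n) (x w) := by rw [pow_succ, Module.End.mul_apply]
    rw [hu, hw, hx, Pi.neg_apply, ih, map_neg, map_neg, pow_succ]
    ring

theorem orthogonal_mem_invtSubmodule (hx : B.IsSkewAdjoint x) {U : Submodule k V}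
    (hU : U ∈ x.invtSubmodule) : B.orthogonal U ∈ x.invtSubmodule := by
  intro v hv u hu
  have h := hx u v
  rw [Pi.neg_apply, map_neg, hv (x u) (hU hu)] at h
  exact (neg_eq_zero.mp h.symm : B u (x v) = 0)

theorem isRefl_compRight_pow (hx : B.IsSkewAdjoint x) (hB : B.IsRefl) (n : ℕ) :
    (B.compRight (x ^ n)).IsRefl := by
  intro u w h
  rw [LinearMap.BilinForm.compRight_apply] at h ⊢
  rw [← mul_eq_zero_iff_left (pow_ne_zero n (neg_ne_zero.mpr one_ne_zero)), ← hx.apply_pow_left]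
  exact hB _ _ h

end LinearMap.IsSkewAdjoint

namespace LinearMap.BilinForm

variable {B : LinearMap.BilinForm k V} {T U : Submodule k V}

theorem iSupIndep_of_pairwise_le_orthogonal {ι : Type*} {W : ι → Submodule k V}
    (horth : Pairwise fun i j => W j ≤ B.orthogonal (W i))
    (hW : ∀ i, Disjoint (W i) (B.orthogonal (W i))) : iSupIndep W :=
  fun i => (hW i).mono_right (iSup₂_le fun _ hj => horth (Ne.symm hj))

theorem IsRefl.exists_sup_inf_orthogonal_eq (hB : B.IsRefl) (T : Submodule k V) :
    ∃ G ≤ T, G ⊔ T ⊓ B.orthogonal T = T ∧ Disjoint G (B.orthogonal G) := by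
  obtain ⟨G', hG'⟩ := Submodule.exists_isCompl (T ⊓ B.orthogonal T)
  have hsup : T ⊓ G' ⊔ T ⊓ B.orthogonal T = T := by
    rw [inf_sup_assoc_of_le _ inf_le_left, sup_comm, hG'.sup_eq_top, inf_top_eq]
  refine ⟨T ⊓ G', inf_le_left, hsup, Submodule.disjoint_def.mpr fun h hG hGorth => ?_⟩
  have hT : h ∈ B.orthogonal T := by
    intro w hw
    rw [← hsup] at hw
    obtain ⟨g, hg, r, hr, rfl⟩ := Submodule.mem_sup.mp hw
    rw [map_add, LinearMap.add_apply, hGorth g hg, hB _ _ (hr.2 h hG.1), add_zero]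
  exact Submodule.disjoint_def.mp hG'.disjoint h ⟨hG.1, hT⟩ hG.2

variable [FiniteDimensional k V]

theorem sup_inf_orthogonal_eq (hB : B.IsRefl) (hUT : U ≤ T)
    (hU : Disjoint U (B.orthogonal U)) : U ⊔ T ⊓ B.orthogonal U = T := by
  rw [inf_comm, ← sup_inf_assoc_of_le _ hUT,
    ((isCompl_orthogonal_iff_disjoint hB).mpr hU).sup_eq_top, top_inf_eq]

theorem disjoint_inf_orthogonal (hB : B.IsRefl) (hUT : U ≤ T) (hU : Disjoint U (B.orthogonal U))
    (hT : Disjoint T (B.orthogonal T)) :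
    Disjoint (T ⊓ B.orthogonal U) (B.orthogonal (T ⊓ B.orthogonal U)) := by
  refine Submodule.disjoint_def.mpr fun v hv hvorth => Submodule.disjoint_def.mp hT v hv.1 ?_
  intro w hw
  rw [← sup_inf_orthogonal_eq hB hUT hU] at hw
  obtain ⟨u, hu, t, ht, rfl⟩ := Submodule.mem_sup.mp hw
  rw [map_add, LinearMap.add_apply, hv.2 u hu, hvorth t ht, add_zero]

end LinearMap.BilinForm

namespace Module.End

variable (x : Module.End k V) (G : Submodule k V) (n : ℕ)

def cyclicMap : (Fin n → G) →ₗ[k] V :=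
  ∑ i : Fin n, (x ^ (i : ℕ)) ∘ₗ G.subtype ∘ₗ LinearMap.proj i

def cyclicSpan : Submodule k V :=
  range (x.cyclicMap G n)

variable {x G n}

theorem cyclicMap_apply (h : Fin n → G) : x.cyclicMap G n h = ∑ i : Fin n, (x ^ (i : ℕ)) (h i) := by
  simp [cyclicMap]

theorem pow_apply_eq_zero_of_le {T : Submodule k V} (hT : T ≤ ker (x ^ n)) {m : ℕ} (hnm : n ≤ m)
    {v : V} (hv : v ∈ T) : (x ^ m) v = 0 := by
  rw [← Nat.sub_add_cancel hnm, pow_add, Module.End.mul_apply, mem_ker.mp (hT hv), map_zero]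

theorem pow_apply_mem_cyclicSpan (hG : G ≤ ker (x ^ n)) (j : ℕ) {g : V} (hg : g ∈ G) :
    (x ^ j) g ∈ x.cyclicSpan G n := by
  by_cases hj : j < n
  · refine ⟨Pi.single ⟨j, hj⟩ ⟨g, hg⟩, ?_⟩
    rw [cyclicMap_apply, Finset.sum_eq_single ⟨j, hj⟩ (fun i _ hi => by simp [hi]) (by simp)]
    simp
  · rw [pow_apply_eq_zero_of_le hG (not_lt.mp hj) hg]
    exact zero_mem _

theorem cyclicSpan_mem_invtSubmodule (hG : G ≤ ker (x ^ n)) :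
    x.cyclicSpan G n ∈ x.invtSubmodule := by
  rintro _ ⟨h, rfl⟩
  rw [Submodule.mem_comap, cyclicMap_apply, map_sum]
  refine Submodule.sum_mem _ fun i _ => ?_
  rw [← Module.End.mul_apply, ← pow_succ']
  exact pow_apply_mem_cyclicSpan hG _ (h i).2

theorem pow_apply_mem_of_mem_invtSubmodule {T : Submodule k V} (hT : T ∈ x.invtSubmodule) (m : ℕ)
    {v : V} (hv : v ∈ T) : (x ^ m) v ∈ T := by
  rw [Module.End.pow_apply]
  exact Set.MapsTo.iterate hT m hv

theorem cyclicSpan_le {T : Submodule k V} (hT : T ∈ x.invtSubmodule) (hGT : G ≤ T) :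
    x.cyclicSpan G n ≤ T := by
  rintro _ ⟨h, rfl⟩
  rw [cyclicMap_apply]
  exact Submodule.sum_mem _ fun i _ => pow_apply_mem_of_mem_invtSubmodule hT _ (hGT (h i).2)

variable {B : LinearMap.BilinForm k V} {s : ℕ}

theorem apply_cyclicMap_of_forall_lt_eq_zero (hx : B.IsSkewAdjoint x)
    (hG : G ≤ ker (x ^ (s + 1))) (h : Fin (s + 1) → G) (i : Fin (s + 1))
    (hi : ∀ j < i, h j = 0) (g : V) :
    B ((x ^ (s - i)) g) (x.cyclicMap G (s + 1) h) = (-1) ^ (s - i) * B g ((x ^ s) (h i)) := by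
  rw [cyclicMap_apply, map_sum, Finset.sum_eq_single i]
  · rw [hx.apply_pow_left, ← Module.End.mul_apply, ← pow_add, Nat.sub_add_cancel (Fin.is_le i)]
  · intro j _ hji
    rcases lt_or_gt_of_ne hji with hlt | hgt
    · simp [hi j hlt]
    · have hij : (i : ℕ) < j := hgt
      rw [hx.apply_pow_left, ← Module.End.mul_apply, ← pow_add,
        pow_apply_eq_zero_of_le hG (by omega) (h j).2, map_zero, mul_zero]
  · simp

/-- The pairing of `x ^ (s - i) G` with `∑ j, x ^ j (h j)` is triangular: once the `h j` with
`j < i` vanish it only sees `h i`, through the form `B g (x ^ s h)`. -/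
theorem eq_zero_of_forall_apply_cyclicMap_eq_zero (hx : B.IsSkewAdjoint x)
    (hG : G ≤ ker (x ^ (s + 1))) (hGC : Disjoint G ((B.compRight (x ^ s)).orthogonal G))
    (m : ℕ) (h : Fin (s + 1) → G)
    (horth : ∀ j, m ≤ j → ∀ g ∈ G, B ((x ^ j) g) (x.cyclicMap G (s + 1) h) = 0) :
    ∀ i : Fin (s + 1), (i : ℕ) + m ≤ s → h i = 0 := by
  intro i
  induction i using WellFoundedLT.induction with
  | _ i ih =>
    intro hi
    have hC : (h i : V) ∈ (B.compRight (x ^ s)).orthogonal G := fun g hg => by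
      have hlt : ∀ j < i, h j = 0 := fun j hj => ih j hj (by have : (j : ℕ) < i := hj; omega)
      have := horth (s - i) (by omega) g hg
      rw [apply_cyclicMap_of_forall_lt_eq_zero hx hG h i hlt g] at this
      simpa using this
    exact Subtype.ext (Submodule.disjoint_def.mp hGC _ (h i).2 hC)

theorem cyclicMap_injective (hx : B.IsSkewAdjoint x) (hG : G ≤ ker (x ^ (s + 1)))
    (hGC : Disjoint G ((B.compRight (x ^ s)).orthogonal G)) :
    Function.Injective (x.cyclicMap G (s + 1)) := by
  refine (injective_iff_map_eq_zero _).mpr fun h h0 => funext fun i => ?_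
  exact eq_zero_of_forall_apply_cyclicMap_eq_zero hx hG hGC 0 h
    (fun _ _ _ _ => by rw [h0, map_zero]) i (by omega)

theorem disjoint_cyclicSpan_orthogonal (hx : B.IsSkewAdjoint x) (hG : G ≤ ker (x ^ (s + 1)))
    (hGC : Disjoint G ((B.compRight (x ^ s)).orthogonal G)) :
    Disjoint (x.cyclicSpan G (s + 1)) (B.orthogonal (x.cyclicSpan G (s + 1))) := by
  refine Submodule.disjoint_def.mpr ?_
  rintro _ ⟨h, rfl⟩ horth
  have h0 : h = 0 := funext fun i => eq_zero_of_forall_apply_cyclicMap_eq_zero hx hG hGC 0 h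
    (fun j _ _ hg => horth _ (pow_apply_mem_cyclicSpan hG j hg)) i (by omega)
  rw [h0, map_zero]

theorem ker_inf_cyclicSpan (hx : B.IsSkewAdjoint x) (hG : G ≤ ker (x ^ (s + 1)))
    (hGC : Disjoint G ((B.compRight (x ^ s)).orthogonal G)) :
    ker x ⊓ x.cyclicSpan G (s + 1) = G.map (x ^ s) := by
  apply le_antisymm
  · rintro _ ⟨hv, h, rfl⟩
    have horth : ∀ j, 1 ≤ j → ∀ g ∈ G, B ((x ^ j) g) (x.cyclicMap G (s + 1) h) = 0 := by
      intro j hj g _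
      rw [← Nat.sub_add_cancel hj, pow_succ', Module.End.mul_apply, hx, Pi.neg_apply,
        mem_ker.mp hv, neg_zero, map_zero]
    have hlast : x.cyclicMap G (s + 1) h = (x ^ s) (h (Fin.last s)) := by
      rw [cyclicMap_apply, Finset.sum_eq_single (Fin.last s)]
      · simp
      · intro i _ hi
        rw [eq_zero_of_forall_apply_cyclicMap_eq_zero hx hG hGC 1 h horth i
          (by have := Fin.val_lt_last hi; omega)]
        simp
      · simp
    exact hlast ▸ Submodule.mem_map_of_mem (h _).2
  · rintro _ ⟨g, hg, rfl⟩
    refine ⟨?_, pow_apply_mem_cyclicSpan hG s hg⟩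
    rw [SetLike.mem_coe, mem_ker, ← Module.End.mul_apply, ← pow_succ']
    exact mem_ker.mp (hG hg)

variable [FiniteDimensional k V]

theorem finrank_cyclicSpan (hx : B.IsSkewAdjoint x) (hG : G ≤ ker (x ^ (s + 1)))
    (hGC : Disjoint G ((B.compRight (x ^ s)).orthogonal G)) :
    finrank k (x.cyclicSpan G (s + 1)) = (s + 1) * finrank k G := by
  rw [cyclicSpan, finrank_range_of_inj (cyclicMap_injective hx hG hGC),
    Module.finrank_pi_fintype]
  simp

theorem succ_mul_finrank_ker_inf_cyclicSpan (hx : B.IsSkewAdjoint x)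
    (hG : G ≤ ker (x ^ (s + 1))) (hGC : Disjoint G ((B.compRight (x ^ s)).orthogonal G)) :
    (s + 1) * finrank k ↥(ker x ⊓ x.cyclicSpan G (s + 1)) =
      finrank k (x.cyclicSpan G (s + 1)) := by
  have hinj : Disjoint G (ker (x ^ s)) := Submodule.disjoint_def.mpr fun g hg hg0 =>
    Submodule.disjoint_def.mp hGC g hg fun _ _ => by
      rw [LinearMap.BilinForm.compRight_apply, mem_ker.mp hg0, map_zero]
  rw [ker_inf_cyclicSpan hx hG hGC, ← range_domRestrict,
    finrank_range_of_inj (injective_domRestrict_iff.mpr hinj), finrank_cyclicSpan hx hG hGC]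

end Module.End

theorem Fin.iSup_cons {α : Type*} [CompleteLattice α] {m : ℕ} (a : α) (f : Fin m → α) :
    ⨆ i, (Fin.cons a f : Fin (m + 1) → α) i = a ⊔ ⨆ i, f i :=
  le_antisymm (iSup_le (Fin.cases le_sup_left fun i => le_sup_of_le_right (le_iSup f i)))
    (sup_le (le_iSup (Fin.cons a f : Fin (m + 1) → α) 0)
      (iSup_le fun i => le_iSup (Fin.cons a f : Fin (m + 1) → α) i.succ))

namespace LinearMap.IsSkewAdjoint

variable {B : LinearMap.BilinForm k V} {x : Module.End k V} {s : ℕ} [FiniteDimensional k V]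

theorem exists_orthogonal_summand_of_le_ker_pow_succ (hx : B.IsSkewAdjoint x) (hB : B.IsRefl)
    {T : Submodule k V} (hT : T ∈ x.invtSubmodule) (hTB : Disjoint T (B.orthogonal T))
    (hTs : T ≤ ker (x ^ (s + 1))) :
    ∃ U ≤ T, U ∈ x.invtSubmodule ∧ Disjoint U (B.orthogonal U) ∧
      (s + 1) * finrank k ↥(ker x ⊓ U) = finrank k U ∧ T ⊓ B.orthogonal U ≤ ker (x ^ s) := by
  have hC := hx.isRefl_compRight_pow hB s
  obtain ⟨G, hGT, hsup, hGC⟩ := hC.exists_sup_inf_orthogonal_eq T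
  have hG : G ≤ ker (x ^ (s + 1)) := hGT.trans hTs
  refine ⟨x.cyclicSpan G (s + 1), Module.End.cyclicSpan_le hT hGT,
    Module.End.cyclicSpan_mem_invtSubmodule hG, Module.End.disjoint_cyclicSpan_orthogonal hx hG hGC,
    Module.End.succ_mul_finrank_ker_inf_cyclicSpan hx hG hGC, ?_⟩
  -- For `v ∈ T ⊓ B.orthogonal U`, `B w (x ^ s v)` vanishes for `w ∈ G` because `x ^ s G ≤ U`,
  -- and for `w` in the radical of `B.compRight (x ^ s)` on `T` by reflexivity of that form;
  -- so `x ^ s v ∈ T ⊓ B.orthogonal T = ⊥`.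
  rintro v ⟨hvT, hvU⟩
  refine mem_ker.mpr (Submodule.disjoint_def.mp hTB _
    (Module.End.pow_apply_mem_of_mem_invtSubmodule hT s hvT) fun w hw => ?_)
  rw [← hsup] at hw
  obtain ⟨g, hg, r, hr, rfl⟩ := Submodule.mem_sup.mp hw
  have hgv : B g ((x ^ s) v) = 0 := by
    have h := hvU _ (Module.End.pow_apply_mem_cyclicSpan hG s hg)
    rw [hx.apply_pow_left] at h
    exact (mul_eq_zero.mp h).resolve_left (pow_ne_zero s (neg_ne_zero.mpr one_ne_zero))
  have hrv : B r ((x ^ s) v) = 0 := hC _ _ (hr.2 v hvT)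
  rw [map_add, LinearMap.add_apply, hgv, hrv, add_zero]

end LinearMap.IsSkewAdjoint

structure IsOrthogonalJordanDecomposition (B : LinearMap.BilinForm k V) (x : Module.End k V)
    (T : Submodule k V) {ι : Type*} (W : ι → Submodule k V) (s : ι → ℕ) : Prop where
  iSup_eq : ⨆ i, W i = T
  pairwise_le_orthogonal : Pairwise fun i j => W j ≤ B.orthogonal (W i)
  disjoint_orthogonal : ∀ i, Disjoint (W i) (B.orthogonal (W i))
  mem_invtSubmodule : ∀ i, W i ∈ x.invtSubmodule
  le_ker_pow : ∀ i, W i ≤ ker (x ^ s i)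
  mul_finrank_ker_inf : ∀ i, s i * finrank k ↥(ker x ⊓ W i) = finrank k (W i)

namespace IsOrthogonalJordanDecomposition

variable {B : LinearMap.BilinForm k V} {x : Module.End k V}

theorem cons (hB : B.IsRefl) {T U : Submodule k V} {m : ℕ} {W : Fin m → Submodule k V}
    {s : Fin m → ℕ} (hW : IsOrthogonalJordanDecomposition B x T W s) (hTU : T ≤ B.orthogonal U)
    (hU : Disjoint U (B.orthogonal U)) (hUx : U ∈ x.invtSubmodule) {n : ℕ}
    (hUn : U ≤ ker (x ^ n)) (hUker : n * finrank k ↥(ker x ⊓ U) = finrank k U) :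
    IsOrthogonalJordanDecomposition B x (U ⊔ T) (Fin.cons U W) (Fin.cons n s) := by
  have hWU : ∀ i, W i ≤ B.orthogonal U := fun i => (le_iSup W i).trans (hW.iSup_eq.le.trans hTU)
  refine ⟨by rw [Fin.iSup_cons, hW.iSup_eq], ?_, Fin.cases hU hW.disjoint_orthogonal,
    Fin.cases hUx hW.mem_invtSubmodule, Fin.cases hUn hW.le_ker_pow,
    Fin.cases hUker hW.mul_finrank_ker_inf⟩
  intro i j hij
  induction i using Fin.cases <;> induction j using Fin.cases
  · exact absurd rfl hij
  · exact hWU _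
  · exact fun u hu w hw => hB _ _ (hWU _ hw u hu)
  · exact hW.pairwise_le_orthogonal fun h => hij (congrArg Fin.succ h)

end IsOrthogonalJordanDecomposition

theorem exists_isOrthogonalJordanDecomposition [FiniteDimensional k V]
    {B : LinearMap.BilinForm k V} {x : Module.End k V} (hx : B.IsSkewAdjoint x) (hB : B.IsRefl)
    (n : ℕ) {T : Submodule k V} (hT : T ∈ x.invtSubmodule) (hTB : Disjoint T (B.orthogonal T))
    (hTn : T ≤ ker (x ^ n)) :
    ∃ (m : ℕ) (W : Fin m → Submodule k V) (s : Fin m → ℕ), StrictAnti s ∧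
      (∀ i, 0 < s i ∧ s i ≤ n) ∧ IsOrthogonalJordanDecomposition B x T W s := by
  induction n generalizing T with
  | zero =>
    have hT0 : T = ⊥ := le_bot_iff.mp (by simpa [Module.End.one_eq_id] using hTn)
    exact ⟨0, Fin.elim0, Fin.elim0, fun i => i.elim0, fun i => i.elim0,
      ⟨by simp [hT0], fun i => i.elim0, fun i => i.elim0, fun i => i.elim0, fun i => i.elim0,
        fun i => i.elim0⟩⟩
  | succ n ih =>
    obtain ⟨U, hUT, hUx, hU, hUker, hT'⟩ :=
      hx.exists_orthogonal_summand_of_le_ker_pow_succ hB hT hTB hTn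
    obtain ⟨m, W, s, hanti, hs, hW⟩ :=
      ih (Module.End.invtSubmodule.inf_mem hT (hx.orthogonal_mem_invtSubmodule hUx))
        (LinearMap.BilinForm.disjoint_inf_orthogonal hB hUT hU hTB) hT'
    refine ⟨m + 1, Fin.cons U W, Fin.cons (n + 1) s,
      (Fin.liftFun_cons (· > ·)).mpr ⟨fun i => Nat.lt_succ_of_le (hs i).2, hanti⟩,
      Fin.cases ⟨n.succ_pos, le_rfl⟩ fun i => ⟨(hs i).1, (hs i).2.trans n.le_succ⟩, ?_⟩
    rw [← LinearMap.BilinForm.sup_inf_orthogonal_eq hB hUT hU]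
    exact hW.cons hB inf_le_right hU hUx (hUT.trans hTn) hUker

end

theorem nilpotent_orthogonal_jordan_decomposition_general
    {k : Type*} [Field k]
    {V : Type*} [AddCommGroup V] [Module k V] [FiniteDimensional k V]
    (ε : k)
    (B : V →ₗ[k] V →ₗ[k] k)
    (hBnd : (∀ v : V, (∀ w : V, B v w = 0) → v = 0) ∧
            (∀ w : V, (∀ v : V, B v w = 0) → w = 0))
    (hBsym : ∀ v w : V, B v w = ε * B w v)
    (x : V →ₗ[k] V) (hnil : IsNilpotent x)
    (hskew : ∀ v w : V, B (x v) w + B v (x w) = 0) :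
    ∃ (m : ℕ) (W : Fin m → Submodule k V) (s : Fin m → ℕ),
      StrictAnti s ∧ (∀ i, 0 < s i) ∧
      DirectSum.IsInternal W ∧
      (∀ i, ∀ v ∈ W i, x v ∈ W i) ∧
      (∀ i j, i ≠ j → ∀ v ∈ W i, ∀ w ∈ W j, B v w = 0) ∧
      (∀ i, (∀ v ∈ W i, (∀ w ∈ W i, B v w = 0) → v = 0) ∧
            (∀ w ∈ W i, (∀ v ∈ W i, B v w = 0) → w = 0)) ∧
      (∀ i, (∀ v ∈ W i, (x ^ (s i)) v = 0) ∧
            s i * Module.finrank k ↥(LinearMap.ker x ⊓ W i) = Module.finrank k ↥(W i)) := by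
  obtain ⟨n, hn⟩ := hnil
  have hx : B.IsSkewAdjoint x := fun v w => by
    rw [Pi.neg_apply, map_neg]
    linear_combination hskew v w
  have hB : LinearMap.BilinForm.IsRefl B := fun v w h => by rw [hBsym, h, mul_zero]
  have htop : Disjoint ⊤ (LinearMap.BilinForm.orthogonal B ⊤) :=
    Submodule.disjoint_def.mpr fun v _ hv => hBnd.2 v fun w => hv w trivial
  obtain ⟨m, W, s, hanti, hs, hW⟩ := exists_isOrthogonalJordanDecomposition hx hB n
    (Module.End.invtSubmodule.top_mem x) htop (by simp [hn])
  refine ⟨m, W, s, hanti, fun i => (hs i).1, ?_, hW.mem_invtSubmodule,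
    fun i j hij v hv w hw => hW.pairwise_le_orthogonal hij hw v hv,
    fun i => ⟨fun v hv hvW => ?_, fun w hw hwW => ?_⟩,
    fun i => ⟨fun v hv => mem_ker.mp (hW.le_ker_pow i hv), hW.mul_finrank_ker_inf i⟩⟩
  · exact (DirectSum.isInternal_submodule_iff_iSupIndep_and_iSup_eq_top W).mpr
      ⟨LinearMap.BilinForm.iSupIndep_of_pairwise_le_orthogonal hW.pairwise_le_orthogonal
        hW.disjoint_orthogonal, hW.iSup_eq⟩
  · exact Submodule.disjoint_def.mp (hW.disjoint_orthogonal i) v hv fun w hw => hB _ _ (hvW w hw)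
  · exact Submodule.disjoint_def.mp (hW.disjoint_orthogonal i) w hw hwW

/-- over an algebraically closed field of characteristic `≠ 2`, if `x` is a
nilpotent endomorphism of `(V, B)` (where `B` is nondegenerate and `ε`-symmetric) with
`B(xv, w) + B(v, xw) = 0`, then `V` decomposes as an orthogonal direct sum of `x`-invariant
subspaces `V⁽ⁱ⁾` on which `B` restricts nondegenerately and `x` acts with all Jordan blocks
of a single size `sᵢ`, for pairwise distinct sizes `s₁ > s₂ > ⋯ > s_m`. -/
theorem nilpotent_orthogonal_jordan_decomposition
    {k : Type*} [Field k] [IsAlgClosed k] (hchar : (2 : k) ≠ 0)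
    {V : Type*} [AddCommGroup V] [Module k V] [FiniteDimensional k V]
    (ε : k) (hε : ε = 1 ∨ ε = -1)
    (B : V →ₗ[k] V →ₗ[k] k)
    (hBnd : (∀ v : V, (∀ w : V, B v w = 0) → v = 0) ∧
            (∀ w : V, (∀ v : V, B v w = 0) → w = 0))
    (hBsym : ∀ v w : V, B v w = ε * B w v)
    (x : V →ₗ[k] V) (hnil : IsNilpotent x)
    (hskew : ∀ v w : V, B (x v) w + B v (x w) = 0) :
    ∃ (m : ℕ) (W : Fin m → Submodule k V) (s : Fin m → ℕ),
      StrictAnti s ∧ (∀ i, 0 < s i) ∧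
      DirectSum.IsInternal W ∧
      (∀ i, ∀ v ∈ W i, x v ∈ W i) ∧
      (∀ i j, i ≠ j → ∀ v ∈ W i, ∀ w ∈ W j, B v w = 0) ∧
      (∀ i, (∀ v ∈ W i, (∀ w ∈ W i, B v w = 0) → v = 0) ∧
            (∀ w ∈ W i, (∀ v ∈ W i, B v w = 0) → w = 0)) ∧
      (∀ i, (∀ v ∈ W i, (x ^ (s i)) v = 0) ∧
            s i * Module.finrank k ↥(LinearMap.ker x ⊓ W i) = Module.finrank k ↥(W i)) :=
  nilpotent_orthogonal_jordan_decomposition_general ε B hBnd hBsym x hnil hskew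
end
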